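/- Let u ∈ C[t,x] be a nonzero polynomial that is shift-free with respect to x (gcd(u, σ_x^j(u)) = 1 in C(t)[x] for all j ∈ ℤ \ {0}). Suppose that for every irreducible factor p of u there exist integers i > 0 and j such that σ_t^i σ_x^j(p) divides u. Then u is integer-linear. -/
import Mathlib


open MvPolynomial

/-- The shift automorphism of `K[t,x]` sending `t ↦ t + a`, `x ↦ x + b`
(variable `0` is `t`, variable `1` is `x`). -/
noncomputable def shift2 (K : Type*) [Field K] [CharZero K] (a b : ℤ) :
    MvPolynomial (Fin 2) K →ₐ[K] MvPolynomial (Fin 2) K :=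
  aeval (fun i => X i + MvPolynomial.C (if i = 0 then (a : K) else (b : K)))

section lemmas
variable {K : Type*} [Field K] [CharZero K]

lemma shift2_X0 (a b : ℤ) : shift2 K a b (X 0) = X 0 + MvPolynomial.C (a : K) := by
  simp [shift2]

lemma shift2_X1 (a b : ℤ) : shift2 K a b (X 1) = X 1 + MvPolynomial.C (b : K) := by
  simp [shift2]

lemma shift2_comp (a b c d : ℤ) (p : MvPolynomial (Fin 2) K) :
    shift2 K a b (shift2 K c d p) = shift2 K (a + c) (b + d) p := by
  have : (shift2 K a b).comp (shift2 K c d) = shift2 K (a + c) (b + d) := by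
    apply MvPolynomial.algHom_ext
    intro i
    fin_cases i <;>
      simp [shift2_X0, shift2_X1, shift2, map_add] <;> push_cast <;> ring
  exact DFunLike.congr_fun this p

lemma shift2_zero_zero (p : MvPolynomial (Fin 2) K) : shift2 K 0 0 p = p := by
  have : shift2 K 0 0 = AlgHom.id K (MvPolynomial (Fin 2) K) := by
    apply MvPolynomial.algHom_ext
    intro i
    fin_cases i <;> simp [shift2_X0, shift2_X1]
  rw [this]; rfl

noncomputable def shiftEquiv (K : Type*) [Field K] [CharZero K] (a b : ℤ) :
    MvPolynomial (Fin 2) K ≃ₐ[K] MvPolynomial (Fin 2) K :=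
  AlgEquiv.ofAlgHom (shift2 K a b) (shift2 K (-a) (-b))
    (by apply MvPolynomial.algHom_ext; intro i
        simp [AlgHom.comp_apply, shift2_comp, shift2_zero_zero])
    (by apply MvPolynomial.algHom_ext; intro i
        simp [AlgHom.comp_apply, shift2_comp, shift2_zero_zero])

lemma shiftEquiv_apply (a b : ℤ) (p : MvPolynomial (Fin 2) K) :
    shiftEquiv K a b p = shift2 K a b p := rfl

lemma irreducible_shift2 {p : MvPolynomial (Fin 2) K} (hp : Irreducible p) (a b : ℤ) :
    Irreducible (shift2 K a b p) := by
  rw [← shiftEquiv_apply]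
  exact (MulEquiv.irreducible_iff (shiftEquiv K a b).toMulEquiv).2 hp

end lemmas

section lemmas2
variable {K : Type*} [Field K] [CharZero K]

lemma unit_eq_C {w : MvPolynomial (Fin 2) K} (h : IsUnit w) : ∃ c : K, w = MvPolynomial.C c := by
  have h1 : IsUnit (finSuccEquiv K 1 w) := h.map _
  rw [Polynomial.isUnit_iff] at h1
  obtain ⟨r, hr, hrw⟩ := h1
  have h2 : IsUnit (finSuccEquiv K 0 r) := hr.map _
  rw [Polynomial.isUnit_iff] at h2
  obtain ⟨s, _, hsr⟩ := h2
  obtain ⟨c, rfl⟩ := MvPolynomial.C_surjective (Fin 0) s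
  refine ⟨c, ?_⟩
  have key : ∀ (n : ℕ) (e : K),
      MvPolynomial.finSuccEquiv K n (MvPolynomial.C e) = Polynomial.C (MvPolynomial.C e) := by
    intro n e
    have h := RingHom.congr_fun (MvPolynomial.finSuccEquiv_comp_C_eq_C (R := K) n) e
    simp only [RingHom.comp_apply, RingHom.coe_coe] at h
    calc MvPolynomial.finSuccEquiv K n (MvPolynomial.C e)
        = MvPolynomial.finSuccEquiv K n
            ((MvPolynomial.finSuccEquiv K n).symm (Polynomial.C (MvPolynomial.C e))) := by
          rw [h]
      _ = Polynomial.C (MvPolynomial.C e) := (MvPolynomial.finSuccEquiv K n).apply_symm_apply _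
  have hr' : r = MvPolynomial.C c := by
    apply (MvPolynomial.finSuccEquiv K 0).injective
    rw [key 0 c, ← hsr]
  apply (MvPolynomial.finSuccEquiv K 1).injective
  rw [key 1 c, ← hrw, hr']

end lemmas2

section lemmas3
variable {K : Type*} [Field K] [CharZero K]

lemma finSuccEquiv_C' (n : ℕ) (e : K) :
    MvPolynomial.finSuccEquiv K n (MvPolynomial.C e) = Polynomial.C (MvPolynomial.C e) := by
  have h := RingHom.congr_fun (MvPolynomial.finSuccEquiv_comp_C_eq_C (R := K) n) e
  simp only [RingHom.comp_apply, RingHom.coe_coe] at h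
  calc MvPolynomial.finSuccEquiv K n (MvPolynomial.C e)
      = MvPolynomial.finSuccEquiv K n
          ((MvPolynomial.finSuccEquiv K n).symm (Polynomial.C (MvPolynomial.C e))) := by
        rw [h]
    _ = Polynomial.C (MvPolynomial.C e) := (MvPolynomial.finSuccEquiv K n).apply_symm_apply _

lemma shift2_C (a b : ℤ) (d : K) : shift2 K a b (MvPolynomial.C d) = MvPolynomial.C d := by
  simp [shift2]

lemma invariant_is_X1 (r : MvPolynomial (Fin 2) K) (hr : r ≠ 0) (I : ℤ) (hI : I ≠ 0) (c : K)
    (h : shift2 K I 0 r = MvPolynomial.C c * r) :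
    ∃ h : Polynomial K, r = Polynomial.aeval (X 1 : MvPolynomial (Fin 2) K) h := by
  set E := MvPolynomial.finSuccEquiv K 1 with hE
  set a : MvPolynomial (Fin 1) K := MvPolynomial.C ((I : ℤ) : K) with ha
  -- commutation of `E` with the shift
  have hEcomm : ∀ p : MvPolynomial (Fin 2) K,
      E (shift2 K I 0 p) = Polynomial.aeval (Polynomial.X + Polynomial.C a) (E p) := by
    intro p
    induction p using MvPolynomial.induction_on with
    | C d => rw [shift2_C, hE, finSuccEquiv_C', Polynomial.aeval_C]
                 ; simp [Polynomial.algebraMap_eq]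
    | add p q hp hq => simp only [map_add, hp, hq]
    | mul_X p i hp =>
        rw [map_mul, map_mul, hp, map_mul]
        congr 1
        fin_cases i
        · rw [show ((⟨0, by norm_num⟩ : Fin 2)) = 0 from rfl, shift2_X0]
          simp only [map_add, hE, MvPolynomial.finSuccEquiv_X_zero, finSuccEquiv_C']
          simp [ha, Polynomial.algebraMap_eq]
        · rw [show ((⟨1, by norm_num⟩ : Fin 2)) = 1 from rfl, shift2_X1]
          have h1 : (1 : Fin 2) = Fin.succ 0 := rfl
          simp only [Int.cast_zero, map_zero, add_zero, h1, hE,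
            MvPolynomial.finSuccEquiv_X_succ]
          simp [Polynomial.algebraMap_eq]
  set F := E r with hF
  have hFne : F ≠ 0 := fun h0 => hr (by
    have := congrArg E.symm h0
    simpa [hF] using this)
  have hF1 : F.comp (Polynomial.X + Polynomial.C a) = Polynomial.C (MvPolynomial.C c) * F := by
    rw [Polynomial.comp_eq_aeval, ← hEcomm, h, map_mul, hE, finSuccEquiv_C']
  -- c = 1
  have hc : MvPolynomial.C c = (1 : MvPolynomial (Fin 1) K) := by
    have hnd : (Polynomial.X + Polynomial.C a).natDegree ≠ 0 := by
      rw [Polynomial.natDegree_X_add_C]; norm_num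
    have hlead := Polynomial.leadingCoeff_comp (p := F) hnd
    rw [hF1, Polynomial.leadingCoeff_mul, Polynomial.leadingCoeff_C,
      Polynomial.leadingCoeff_X_add_C, one_pow, mul_one] at hlead
    exact mul_right_cancel₀ (Polynomial.leadingCoeff_ne_zero.mpr hFne)
      (by rw [hlead, one_mul])
  rw [hc, map_one, one_mul] at hF1
  -- eval invariance and infinitude of roots
  have hev : ∀ z, F.eval (z + a) = F.eval z := by
    intro z
    conv_rhs => rw [← hF1]
    simp [Polynomial.eval_comp]
  have hn : ∀ n : ℕ, F.eval (n • a) = F.eval 0 := by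
    intro n
    induction n with
    | zero => simp
    | succ n ih => rw [succ_nsmul, hev, ih]
  have hIK : ((I : ℤ) : K) ≠ 0 := Int.cast_ne_zero.mpr hI
  have hkey : ∀ n : ℕ, (n • a : MvPolynomial (Fin 1) K)
      = MvPolynomial.C ((n : K) * ((I : ℤ) : K)) := by
    intro n
    rw [ha, ← map_nsmul, nsmul_eq_mul]
  have hinj : Function.Injective fun n : ℕ => (n • a : MvPolynomial (Fin 1) K) := by
    intro n m hnm
    simp only [hkey] at hnm
    have := MvPolynomial.C_injective (Fin 1) K hnm
    exact Nat.cast_injective (mul_right_cancel₀ hIK this)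
  have hG : F - Polynomial.C (F.eval 0) = 0 := by
    apply Polynomial.eq_zero_of_infinite_isRoot
    apply Set.infinite_of_injective_forall_mem hinj
    intro n
    show Polynomial.IsRoot _ (n • a)
    simp only [Polynomial.IsRoot, Polynomial.eval_sub, Polynomial.eval_C, hn n, sub_self]
  have hFC : F = Polynomial.C (F.eval 0) := by linear_combination (norm := ring_nf) hG
  set m := F.eval 0 with hm
  -- r = rename Fin.succ m
  have hren : ∀ m : MvPolynomial (Fin 1) K,
      E (MvPolynomial.rename Fin.succ m) = Polynomial.C m := by
    intro m
    induction m using MvPolynomial.induction_on with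
    | C d => rw [MvPolynomial.rename_C, hE, finSuccEquiv_C']
    | add p q hp hq => simp only [map_add, hp, hq]
    | mul_X p i hp => rw [map_mul, MvPolynomial.rename_X, map_mul, hp, hE,
        MvPolynomial.finSuccEquiv_X_succ, map_mul]
  have hrm : r = MvPolynomial.rename Fin.succ m := by
    apply E.injective
    rw [hren, ← hF, hFC]
  -- m comes from a one-variable polynomial
  have hsur : ∃ hpol : Polynomial K,
      Polynomial.aeval (X 0 : MvPolynomial (Fin 1) K) hpol = m := by
    induction m using MvPolynomial.induction_on with
    | C d => exact ⟨Polynomial.C d, by simp [MvPolynomial.algebraMap_eq]⟩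
    | add p q hp hq =>
        obtain ⟨p', hp'⟩ := hp; obtain ⟨q', hq'⟩ := hq
        exact ⟨p' + q', by rw [map_add, hp', hq']⟩
    | mul_X p i hp =>
        obtain ⟨p', hp'⟩ := hp
        have hi : i = 0 := Subsingleton.elim _ _
        exact ⟨p' * Polynomial.X, by rw [map_mul, hp', Polynomial.aeval_X, hi]⟩
  obtain ⟨hpol, hhpol⟩ := hsur
  refine ⟨hpol, ?_⟩
  rw [hrm, ← hhpol, ← Polynomial.aeval_algHom_apply, MvPolynomial.rename_X,
    Fin.succ_zero_eq_one]

end lemmas3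

section lemmas4
variable {K : Type*} [Field K] [CharZero K]

lemma key_lemma (q : MvPolynomial (Fin 2) K) (hq : q ≠ 0) (I J : ℤ) (hI : I ≠ 0) (c : K)
    (h : shift2 K I J q = MvPolynomial.C c * q) :
    ∃ (h : Polynomial K) (m n : ℤ),
      q = Polynomial.aeval ((m : K) • (X 0 : MvPolynomial (Fin 2) K) + (n : K) • X 1) h := by
  have hIK : ((I : ℤ) : K) ≠ 0 := Int.cast_ne_zero.mpr hI
  set φ : MvPolynomial (Fin 2) K →ₐ[K] MvPolynomial (Fin 2) K :=
    aeval (fun i => if i = 0 then X 0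
      else MvPolynomial.C ((J : ℤ) : K) * X 0 - MvPolynomial.C ((I : ℤ) : K) * X 1) with hφ
  set ψ : MvPolynomial (Fin 2) K →ₐ[K] MvPolynomial (Fin 2) K :=
    aeval (fun i => if i = 0 then X 0
      else MvPolynomial.C (((J : ℤ) : K) / ((I : ℤ) : K)) * X 0
        - MvPolynomial.C ((1 : K) / ((I : ℤ) : K)) * X 1) with hψ
  have hφ0 : φ (X 0) = X 0 := by simp [hφ]
  have hφ1 : φ (X 1) = MvPolynomial.C ((J : ℤ) : K) * X 0
      - MvPolynomial.C ((I : ℤ) : K) * X 1 := by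
    simp [hφ]
  have hψ0 : ψ (X 0) = X 0 := by simp [hψ]
  have hψ1 : ψ (X 1) = MvPolynomial.C (((J : ℤ) : K) / ((I : ℤ) : K)) * X 0
      - MvPolynomial.C ((1 : K) / ((I : ℤ) : K)) * X 1 := by
    simp [hψ]
  have hψφ : ∀ p, ψ (φ p) = p := by
    have : ψ.comp φ = AlgHom.id K (MvPolynomial (Fin 2) K) := by
      apply MvPolynomial.algHom_ext
      intro i
      fin_cases i
      · simp [AlgHom.comp_apply, hφ0, hψ0]
      · show ψ (φ (X 1)) = X 1
        rw [hφ1, map_sub, map_mul, map_mul, hψ0, hψ1]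
        have hC : ∀ d : K, ψ (MvPolynomial.C d) = MvPolynomial.C d := by
          intro d; simp [hψ, MvPolynomial.algebraMap_eq]
        rw [hC, hC, div_eq_mul_inv, one_div, MvPolynomial.C_mul]
        have hcan : MvPolynomial.C (((I : ℤ) : K)) * MvPolynomial.C ((((I : ℤ) : K))⁻¹)
            = (1 : MvPolynomial (Fin 2) K) := by
          rw [← MvPolynomial.C_mul, mul_inv_cancel₀ hIK, MvPolynomial.C_1]
        linear_combination (X 1 - MvPolynomial.C ((J : ℤ) : K) * X 0) * hcan
    exact fun p => DFunLike.congr_fun this p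
  have hφψ : ∀ p, φ (ψ p) = p := by
    have : φ.comp ψ = AlgHom.id K (MvPolynomial (Fin 2) K) := by
      apply MvPolynomial.algHom_ext
      intro i
      fin_cases i
      · simp [AlgHom.comp_apply, hφ0, hψ0]
      · show φ (ψ (X 1)) = X 1
        rw [hψ1, map_sub, map_mul, map_mul, hφ0, hφ1]
        have hC : ∀ d : K, φ (MvPolynomial.C d) = MvPolynomial.C d := by
          intro d; simp [hφ, MvPolynomial.algebraMap_eq]
        rw [hC, hC, div_eq_mul_inv, one_div, MvPolynomial.C_mul]
        have hcan : MvPolynomial.C (((I : ℤ) : K)) * MvPolynomial.C ((((I : ℤ) : K))⁻¹)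
            = (1 : MvPolynomial (Fin 2) K) := by
          rw [← MvPolynomial.C_mul, mul_inv_cancel₀ hIK, MvPolynomial.C_1]
        linear_combination (X 1 : MvPolynomial (Fin 2) K) * hcan
    exact fun p => DFunLike.congr_fun this p
  have hφC : ∀ d : K, φ (MvPolynomial.C d) = MvPolynomial.C d := by
    intro d; simp [hφ, MvPolynomial.algebraMap_eq]
  have hcomm : ∀ p, shift2 K I J (φ p) = φ (shift2 K I 0 p) := by
    have : (shift2 K I J).comp φ = φ.comp (shift2 K I 0) := by
      apply MvPolynomial.algHom_ext
      intro i
      fin_cases i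
      · show shift2 K I J (φ (X 0)) = φ (shift2 K I 0 (X 0))
        rw [hφ0, shift2_X0, shift2_X0, map_add, hφ0, hφC]
      · show shift2 K I J (φ (X 1)) = φ (shift2 K I 0 (X 1))
        rw [hφ1, shift2_X1, map_sub, map_mul, map_mul, shift2_X0, shift2_X1,
          shift2_C, shift2_C, map_add, hφ1, hφC]
        push_cast
        simp only [map_zero, add_zero]
        ring
    exact fun p => DFunLike.congr_fun this p
  set r := ψ q with hr
  have hφr : φ r = q := hφψ q
  have hr0 : r ≠ 0 := by
    intro h0
    rw [← hφr, h0, map_zero] at hq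
    exact hq rfl
  have hshift : shift2 K I 0 r = MvPolynomial.C c * r := by
    have hinj : Function.Injective φ := Function.LeftInverse.injective hψφ
    apply hinj
    rw [← hcomm, hφr, h, map_mul, hφC, hφr]
  obtain ⟨hpol, hrpol⟩ := invariant_is_X1 r hr0 I hI c hshift
  refine ⟨hpol, J, -I, ?_⟩
  have hXform : ((J : ℤ) : K) • (X 0 : MvPolynomial (Fin 2) K) + (((-I : ℤ) : ℤ) : K) • X 1
      = φ (X 1) := by
    rw [hφ1, MvPolynomial.smul_eq_C_mul, MvPolynomial.smul_eq_C_mul,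
      Int.cast_neg, map_neg]
    ring
  rw [hXform, Polynomial.aeval_algHom_apply, ← hrpol, hφr]

end lemmas4

/-- A polynomial in `K[t,x]` is integer-linear if every irreducible factor has the
form `h(mt + nx)` with `h ∈ K[z]` and `m, n ∈ ℤ`. -/
def IsIntegerLinear {K : Type*} [Field K] [CharZero K] (p : MvPolynomial (Fin 2) K) : Prop :=
  ∀ q : MvPolynomial (Fin 2) K, Irreducible q → q ∣ p →
    ∃ (h : Polynomial K) (m n : ℤ),
      q = Polynomial.aeval ((m : K) • (X 0 : MvPolynomial (Fin 2) K) + (n : K) • X 1) h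

/-- Let `u ∈ K[t,x]` be nonzero and shift-free with respect to `x`, i.e. `u` and
`σ_x^j(u)` share no common irreducible factor of positive `x`-degree for `j ≠ 0`
(`gcd(u, σ_x^j(u)) = 1` in `K(t)[x]`).  If for every irreducible factor `p` of `u` there
exist `i > 0` and `j ∈ ℤ` with `σ_t^i σ_x^j(p) ∣ u`, then `u` is integer-linear. -/
theorem integer_linear_of_shiftfree_orbits (K : Type*) [Field K] [CharZero K]
    (u : MvPolynomial (Fin 2) K) (hu : u ≠ 0)
    (hshiftfree : ∀ j : ℤ, j ≠ 0 →
      ∀ q : MvPolynomial (Fin 2) K, Irreducible q → degreeOf 1 q ≠ 0 →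
        q ∣ u → ¬ q ∣ shift2 K 0 j u)
    (horbit : ∀ p : MvPolynomial (Fin 2) K, Irreducible p → p ∣ u →
      ∃ (i j : ℤ), 0 < i ∧ shift2 K i j p ∣ u) :
    IsIntegerLinear u := by
  classical
  intro q hqirr hqdvd
  -- a step function refining the orbit hypothesis
  have step : ∀ v : MvPolynomial (Fin 2) K × ℤ × ℤ,
      ∃ w : MvPolynomial (Fin 2) K × ℤ × ℤ,
        Irreducible v.1 → v.1 ∣ u →
          Irreducible w.1 ∧ w.1 ∣ u ∧
          ∃ i j : ℤ, 0 < i ∧ w.1 = shift2 K i j v.1 ∧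
            w.2.1 = v.2.1 + i ∧ w.2.2 = v.2.2 + j := by
    intro v
    by_cases hv : Irreducible v.1 ∧ v.1 ∣ u
    · obtain ⟨i, j, hi, hdvd⟩ := horbit v.1 hv.1 hv.2
      exact ⟨(shift2 K i j v.1, v.2.1 + i, v.2.2 + j), fun _ _ =>
        ⟨irreducible_shift2 hv.1 i j, hdvd, i, j, hi, rfl, rfl, rfl⟩⟩
    · exact ⟨v, fun h1 h2 => absurd ⟨h1, h2⟩ hv⟩
  choose stepf hstepf using step
  set g : ℕ → MvPolynomial (Fin 2) K × ℤ × ℤ :=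
    fun n => Nat.rec (q, (0 : ℤ), (0 : ℤ)) (fun _ p => stepf p) n with hg
  have hg0 : g 0 = (q, 0, 0) := rfl
  have hgs : ∀ n, g (n + 1) = stepf (g n) := fun n => rfl
  -- invariant
  have inv : ∀ n, Irreducible (g n).1 ∧ (g n).1 ∣ u ∧
      (g n).1 = shift2 K (g n).2.1 (g n).2.2 q := by
    intro n
    induction n with
    | zero => exact ⟨hqirr, hqdvd, by rw [hg0, shift2_zero_zero]⟩
    | succ n ih =>
        obtain ⟨hirr, hdvd, heq⟩ := ih
        obtain ⟨hirr', hdvd', i, j, hi, heq', ha', hb'⟩ := hstepf (g n) hirr hdvd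
        refine ⟨by rw [hgs]; exact hirr', by rw [hgs]; exact hdvd', ?_⟩
        rw [hgs, heq', heq, shift2_comp, ha', hb', add_comm i, add_comm j]
  -- strict monotonicity of the t-shift
  have mono : StrictMono fun n => (g n).2.1 := by
    apply strictMono_nat_of_lt_succ
    intro n
    obtain ⟨hirr, hdvd, _⟩ := inv n
    obtain ⟨_, _, i, j, hi, _, ha', _⟩ := hstepf (g n) hirr hdvd
    show (g n).2.1 < (g (n + 1)).2.1
    rw [hgs, ha']
    omega
  -- pigeonhole among the irreducible factors of u
  have hassoc : ∀ n, ∃ v ∈ UniqueFactorizationMonoid.factors u, Associated (g n).1 v :=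
    fun n => UniqueFactorizationMonoid.exists_mem_factors_of_dvd hu (inv n).1 (inv n).2.1
  choose Ff hF1 hF2 using hassoc
  set s := (UniqueFactorizationMonoid.factors u).toFinset with hs
  have hmaps : ∀ n ∈ Finset.range (s.card + 1), Ff n ∈ s :=
    fun n _ => Multiset.mem_toFinset.2 (hF1 n)
  obtain ⟨k, hk, l, hl, hkl, hFkl⟩ :=
    Finset.exists_ne_map_eq_of_card_lt_of_maps_to (by simp) hmaps
  have key2 : ∃ k l : ℕ, k < l ∧ Associated ((g k).1) ((g l).1) := by
    rcases lt_or_gt_of_ne hkl with hlt | hgt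
    · exact ⟨k, l, hlt, (hF2 k).trans (hFkl ▸ (hF2 l).symm)⟩
    · exact ⟨l, k, hgt, (hF2 l).trans (hFkl ▸ (hF2 k).symm)⟩
  obtain ⟨k', l', hkl', hassoc'⟩ := key2
  -- produce the self-associated positive shift of q
  set A := (g k').2.1 with hA
  set B := (g k').2.2 with hB
  set A' := (g l').2.1 with hA'
  set B' := (g l').2.2 with hB'
  have hAA' : A < A' := mono hkl'
  rw [(inv k').2.2, (inv l').2.2] at hassoc'
  have hassoc2 : Associated q (shift2 K (A' - A) (B' - B) q) := by
    have h1 := hassoc'.map (shift2 K (-A) (-B)).toRingHom.toMonoidHom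
    have e1 : (shift2 K (-A) (-B)).toRingHom.toMonoidHom
        ((shift2 K (g k').2.1 (g k').2.2) q) = q := by
      show shift2 K (-A) (-B) (shift2 K (g k').2.1 (g k').2.2 q) = q
      rw [shift2_comp, ← hA, ← hB, neg_add_cancel, neg_add_cancel, shift2_zero_zero]
    have e2 : (shift2 K (-A) (-B)).toRingHom.toMonoidHom
        ((shift2 K (g l').2.1 (g l').2.2) q) = shift2 K (A' - A) (B' - B) q := by
      show shift2 K (-A) (-B) (shift2 K (g l').2.1 (g l').2.2 q)
        = shift2 K (A' - A) (B' - B) q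
      rw [shift2_comp, ← hA', ← hB', neg_add_eq_sub, neg_add_eq_sub]
    rw [e1, e2] at h1
    exact h1
  obtain ⟨w, hw⟩ := hassoc2
  obtain ⟨c, hc⟩ := unit_eq_C w.isUnit
  have hfinal : shift2 K (A' - A) (B' - B) q = MvPolynomial.C c * q := by
    rw [← hw, hc, mul_comm]
  exact key_lemma q hqirr.ne_zero (A' - A) (B' - B) (by omega) c hfinal
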